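/- arXiv:1805.12559 — 7 statements merged into one kernel-verified Lean document; each statement's English description precedes it below -/
import Mathlib

section
/- Let n ≥ 2 be an integer and let δ be a real number with 0 < δ < 1/(2n). Let c_1 ≤ c_2 ≤ … ≤ c_m be a cut configuration in [0,n] with m ≤ n, and suppose that for every integer j with 2 ≤ j ≤ n and every label s ∈ {+,−}, the measure of s on the monitored interval [j−2,j] is strictly less than 1+δ. Then m ≥ n−1 and, for every index i with 1 ≤ i ≤ m−1, the gap between consecutive cuts satisfies 1 − 2nδ ≤ c_{i+1} − c_i ≤ 1 + 2δ. -/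
/-- The alternating labelling induced by a cut configuration `c` on `[0,n]`:
`+` (i.e. `true`) at `x` iff the number of cuts strictly below `x` is even. -/
noncomputable def cutLabel {m : ℕ} (c : Fin m → ℝ) (x : ℝ) : Bool :=
  decide (Even (Nat.card {i : Fin m // c i < x}))

/-- The Lebesgue measure of the set of points of the monitored interval `[j-2, j]`
carrying the label `s`. -/
noncomputable def labelMeasure {m : ℕ} (c : Fin m → ℝ) (j : ℕ) (s : Bool) : ENNReal :=
  MeasureTheory.volume {x : ℝ | x ∈ Set.Icc ((j : ℝ) - 2) (j : ℝ) ∧ cutLabel c x = s}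

/-!
Adjoin `0` and `n` to the cuts to get breakpoints `0 = b₀ ≤ b₁ ≤ … ≤ b_{m+1} = n`; the label is
constant on each piece `(b_l, b_{l+1}]` and alternates from piece to piece. A piece longer than
`1 + 2δ` would cover more than `1 + δ` of some monitored interval, so every piece has length at
most `1 + 2δ`. The `m + 1` pieces fill `[0, n]`, hence `m ≥ n - 1`, and moreover `b_i ≤ i + 2iδ`
and `b_{i+3} ≥ i + 2 - 2(n - i - 2)δ`. For the lower bound on `g = b_{i+2} - b_{i+1}` use the
signed length `D(x) = ∫₀ˣ (±1)`: it is `1`-Lipschitz, changes by less than `2δ` across the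
monitored interval `[i, i+2]`, and changes by `±(g_i - g + g_{i+2})` across `[b_i, b_{i+3}]`.
Comparing the two gives `2g ≥ 2 - O(nδ)`.
-/

open Finset MeasureTheory

section SignedLength

lemma monotone_min_sub_min {a b : ℝ} (hab : a ≤ b) : Monotone fun x => min b x - min a x := by
  intro x y hxy
  simp only [min_def]
  split_ifs <;> linarith

lemma volume_Ioc_inter_Ioc {a b u v : ℝ} (hab : a ≤ b) (huv : u ≤ v) :
    volume (Set.Ioc a b ∩ Set.Ioc u v)
      = ENNReal.ofReal ((min b v - min a v) - (min b u - min a u)) := by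
  have hpos : max (min b v - max a u) 0 = (min b v - min a v) - (min b u - min a u) := by
    simp only [min_def, max_def]
    split_ifs <;> linarith
  rw [Set.Ioc_inter_Ioc, Real.volume_Ioc, ← hpos, ENNReal.ofReal_max, ENNReal.ofReal_zero,
    max_eq_left zero_le]

/-- The integral from `b 0` to `x` of the label that is `+1` on the even pieces
`(b l, b (l+1)]` and `-1` on the odd ones. -/
noncomputable def signedLength (b : ℕ → ℝ) (N : ℕ) (x : ℝ) : ℝ :=
  ∑ l ∈ range N, (-1) ^ l * (min (b (l + 1)) x - min (b l) x)

variable {b : ℕ → ℝ} {N : ℕ}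

lemma signedLength_sub (u v : ℝ) :
    signedLength b N v - signedLength b N u
      = ∑ l ∈ range N,
          (-1) ^ l * ((min (b (l + 1)) v - min (b l) v) - (min (b (l + 1)) u - min (b l) u)) := by
  simp only [signedLength, ← sum_sub_distrib, mul_sub]

lemma abs_signedLength_sub_le (hb : Monotone b) (x y : ℝ) :
    |signedLength b N y - signedLength b N x| ≤ |y - x| := by
  wlog hxy : x ≤ y generalizing x y
  · rw [abs_sub_comm, abs_sub_comm y]
    exact this y x (le_of_not_ge hxy)
  have hmono l := monotone_min_sub_min (hb (Nat.le_succ l)) hxy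
  calc |signedLength b N y - signedLength b N x|
      ≤ ∑ l ∈ range N,
          ((min (b (l + 1)) y - min (b l) y) - (min (b (l + 1)) x - min (b l) x)) := by
        rw [signedLength_sub]
        refine (abs_sum_le_sum_abs _ _).trans (le_of_eq (sum_congr rfl fun l _ => ?_))
        rw [abs_mul, abs_pow, abs_neg, abs_one, one_pow, one_mul,
          abs_of_nonneg (sub_nonneg.2 (hmono l))]
    _ = (min (b N) y - min (b 0) y) - (min (b N) x - min (b 0) x) := by
        rw [sum_sub_distrib, sum_range_sub (fun l => min (b l) y),
          sum_range_sub (fun l => min (b l) x)]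
    _ ≤ |y - x| := by
        refine le_trans ?_ (le_abs_self _)
        simp only [min_def]
        split_ifs <;> linarith

lemma signedLength_succ_sub (hb : Monotone b) {l : ℕ} (hl : l < N) :
    signedLength b N (b (l + 1)) - signedLength b N (b l) = (-1) ^ l * (b (l + 1) - b l) := by
  rw [signedLength_sub, sum_eq_single_of_mem l (mem_range.2 hl)]
  · rw [min_self, min_self, min_eq_left (hb l.le_succ), min_eq_right (hb l.le_succ)]
    ring
  · intro k _ hkl
    rcases lt_or_gt_of_ne hkl with h | h
    · rw [min_eq_left (hb (by omega : k + 1 ≤ l + 1)), min_eq_left (hb (by omega : k ≤ l + 1)),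
        min_eq_left (hb (by omega : k + 1 ≤ l)), min_eq_left (hb (by omega : k ≤ l))]
      ring
    · rw [min_eq_right (hb (by omega : l + 1 ≤ k + 1)), min_eq_right (hb (by omega : l + 1 ≤ k)),
        min_eq_right (hb (by omega : l ≤ k + 1)), min_eq_right (hb (by omega : l ≤ k))]
      ring

end SignedLength

lemma sub_le_mul_of_succ_sub_le {b : ℕ → ℝ} {g : ℝ} {i k : ℕ} (hik : i ≤ k)
    (h : ∀ l, i ≤ l → l < k → b (l + 1) - b l ≤ g) : b k - b i ≤ (k - i : ℕ) * g := by
  induction k, hik using Nat.le_induction with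
  | base => simp
  | succ k hik ih =>
    have := h k hik k.lt_succ_self
    have := ih fun l hil hlk => h l hil (hlk.trans k.lt_succ_self)
    rw [Nat.succ_sub hik, Nat.cast_succ]
    linarith

/-- The sequence `0, c 0, …, c (m-1), n, n, …`; its pieces `(b l, b (l+1)]`, `l ≤ m`,
partition `(0, n]` and carry the label `Even l`. -/
noncomputable def breakpoint {m : ℕ} (n : ℕ) (c : Fin m → ℝ) : ℕ → ℝ
  | 0 => 0
  | l + 1 => if h : l < m then c ⟨l, h⟩ else n

section Breakpoint

variable {m n : ℕ} {c : Fin m → ℝ}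

@[simp] lemma breakpoint_zero : breakpoint n c 0 = 0 := rfl

lemma breakpoint_succ_of_lt {l : ℕ} (h : l < m) : breakpoint n c (l + 1) = c ⟨l, h⟩ :=
  dif_pos h

lemma breakpoint_succ_of_le {l : ℕ} (h : m ≤ l) : breakpoint n c (l + 1) = n :=
  dif_neg (not_lt.2 h)

lemma breakpoint_mono (hmono : Monotone c) (hrange : ∀ i, c i ∈ Set.Icc (0 : ℝ) n) :
    Monotone (breakpoint n c) := by
  refine monotone_nat_of_le_succ fun l => ?_
  rcases l with _ | l
  · rcases Nat.eq_zero_or_pos m with hm | hm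
    · simp [breakpoint_succ_of_le (n := n) (c := c) hm.le]
    · simpa [breakpoint_succ_of_lt hm] using (hrange _).1
  · rcases lt_or_ge (l + 1) m with h | h
    · rw [breakpoint_succ_of_lt h, breakpoint_succ_of_lt (l.lt_succ_self.trans h)]
      exact hmono (Fin.mk_le_mk.2 l.le_succ)
    · rw [breakpoint_succ_of_le h]
      rcases lt_or_ge l m with h' | h'
      · simpa [breakpoint_succ_of_lt h'] using (hrange _).2
      · rw [breakpoint_succ_of_le h']

lemma cutLabel_eq_of_mem_Ioc (hmono : Monotone c) (hrange : ∀ i, c i ∈ Set.Icc (0 : ℝ) n)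
    {l : ℕ} (hl : l ≤ m) {x : ℝ} (hx : x ∈ Set.Ioc (breakpoint n c l) (breakpoint n c (l + 1))) :
    cutLabel c x = decide (Even l) := by
  have hb := breakpoint_mono hmono hrange
  have hcut : ∀ i : Fin m, c i < x ↔ (i : ℕ) < l := fun i => by
    have hi : breakpoint n c (i + 1) = c i := breakpoint_succ_of_lt i.isLt
    constructor
    · intro h
      by_contra! hil
      linarith [hx.2, hb (Nat.succ_le_succ hil), hi]
    · intro h
      linarith [hx.1, hb (Nat.succ_le_of_lt h), hi]
  have hcard : Nat.card {i : Fin m // c i < x} = l := by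
    rw [Nat.card_congr (Equiv.subtypeEquivRight hcut), Nat.card_eq_fintype_card,
      Fintype.card_subtype, Fin.card_filter_val_lt, min_eq_right hl]
  rw [cutLabel, hcard]

end Breakpoint

section Measure

variable {m n : ℕ} {c : Fin m → ℝ}

lemma ofReal_le_labelMeasure {j : ℕ} {u v : ℝ} {s : Bool} (hu : (j : ℝ) - 2 ≤ u) (hv : v ≤ j)
    (hlab : ∀ x ∈ Set.Ioc u v, cutLabel c x = s) :
    ENNReal.ofReal (v - u) ≤ labelMeasure c j s := by
  rw [labelMeasure, ← Real.volume_Ioc]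
  exact measure_mono fun x hx => ⟨⟨hu.trans hx.1.le, hx.2.trans hv⟩, hlab x hx⟩

lemma sum_volume_inter_le_labelMeasure (hmono : Monotone c)
    (hrange : ∀ i, c i ∈ Set.Icc (0 : ℝ) n) {j : ℕ} {s : Bool} {S : Finset ℕ}
    (hS : ∀ l ∈ S, l ≤ m ∧ decide (Even l) = s) :
    ∑ l ∈ S,
        volume (Set.Ioc (breakpoint n c l) (breakpoint n c (l + 1)) ∩ Set.Ioc ((j : ℝ) - 2) j)
      ≤ labelMeasure c j s := by
  have hdisj : Pairwise (Function.onFun Disjoint fun l =>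
      Set.Ioc (breakpoint n c l) (breakpoint n c (l + 1)) ∩ Set.Ioc ((j : ℝ) - 2) j) :=
    fun k l hkl => ((breakpoint_mono hmono hrange).pairwise_disjoint_on_Ioc_succ hkl).mono
      Set.inter_subset_left Set.inter_subset_left
  rw [← measure_biUnion_finset (hdisj.set_pairwise _)
    fun _ _ => measurableSet_Ioc.inter measurableSet_Ioc]
  refine measure_mono (Set.iUnion₂_subset fun l hl x hx => ⟨Set.Ioc_subset_Icc_self hx.2, ?_⟩)
  rw [cutLabel_eq_of_mem_Ioc hmono hrange (hS l hl).1 hx.1, (hS l hl).2]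

end Measure

def CutBalanced {m : ℕ} (n : ℕ) (δ : ℝ) (c : Fin m → ℝ) : Prop :=
  ∀ j : ℕ, 2 ≤ j → j ≤ n → ∀ s : Bool, labelMeasure c j s < ENNReal.ofReal (1 + δ)

namespace CutBalanced

variable {m n : ℕ} {δ : ℝ} {c : Fin m → ℝ}

lemma sub_lt_of_cutLabel_eq (h : CutBalanced n δ c) {j : ℕ} (hj2 : 2 ≤ j) (hjn : j ≤ n)
    {u v : ℝ} {s : Bool} (hu : (j : ℝ) - 2 ≤ u) (hv : v ≤ j)
    (hlab : ∀ x ∈ Set.Ioc u v, cutLabel c x = s) : v - u < 1 + δ :=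
  (ENNReal.ofReal_lt_ofReal_iff'.1 ((ofReal_le_labelMeasure hu hv hlab).trans_lt
    (h j hj2 hjn s))).1

/-- A run of one label longer than `1 + 2δ` starting at `a` contains more than `1 + δ` of the
monitored interval `[⌊a⌋, ⌊a⌋ + 2]` or of `[⌊a⌋ + 1, ⌊a⌋ + 3]`. -/
lemma sub_le_of_cutLabel_eq (h : CutBalanced n δ c) (hδ0 : 0 ≤ δ) (hδ : δ < 1) {a v : ℝ} {s : Bool}
    (ha : 0 ≤ a) (hv : v ≤ n) (hlab : ∀ x ∈ Set.Ioc a v, cutLabel c x = s) :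
    v - a ≤ 1 + 2 * δ := by
  by_contra! hlong
  have hF : (⌊a⌋₊ : ℝ) ≤ a := Nat.floor_le ha
  have hF' : a < ⌊a⌋₊ + 1 := Nat.lt_floor_add_one a
  have hsub {u w : ℝ} (hu : a ≤ u) (hw : w ≤ v) : ∀ x ∈ Set.Ioc u w, cutLabel c x = s :=
    fun x hx => hlab x ⟨hu.trans_lt hx.1, hx.2.trans hw⟩
  rcases lt_or_ge (a - ⌊a⌋₊) (1 - δ) with hfrac | hfrac
  · have hjn : ⌊a⌋₊ + 2 ≤ n := by
      have : (⌊a⌋₊ : ℝ) + 1 < n := by linarith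
      exact_mod_cast this
    have := h.sub_lt_of_cutLabel_eq (j := ⌊a⌋₊ + 2) (by omega) hjn (u := a)
      (v := min v (⌊a⌋₊ + 2)) (by push_cast; linarith) (by push_cast; exact min_le_right _ _)
      (hsub le_rfl (min_le_left _ _))
    rcases min_cases v ((⌊a⌋₊ : ℝ) + 2) with ⟨hmin, _⟩ | ⟨hmin, _⟩ <;> linarith
  · have hjn : ⌊a⌋₊ + 3 ≤ n := by
      have : (⌊a⌋₊ : ℝ) + 2 < n := by linarith
      exact_mod_cast this
    have := h.sub_lt_of_cutLabel_eq (j := ⌊a⌋₊ + 3) (by omega) hjn (u := ⌊a⌋₊ + 1)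
      (v := min v (⌊a⌋₊ + 3)) (by push_cast; linarith) (by push_cast; exact min_le_right _ _)
      (hsub hF'.le (min_le_left _ _))
    rcases min_cases v ((⌊a⌋₊ : ℝ) + 3) with ⟨hmin, _⟩ | ⟨hmin, _⟩ <;> linarith

lemma breakpoint_succ_sub_le (h : CutBalanced n δ c) (hmono : Monotone c)
    (hrange : ∀ i, c i ∈ Set.Icc (0 : ℝ) n) (hδ0 : 0 ≤ δ) (hδ : δ < 1) {l : ℕ} (hl : l ≤ m) :
    breakpoint n c (l + 1) - breakpoint n c l ≤ 1 + 2 * δ := by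
  have hb := breakpoint_mono hmono hrange
  refine h.sub_le_of_cutLabel_eq hδ0 hδ (by simpa using hb l.zero_le) ?_
    fun x hx => cutLabel_eq_of_mem_Ioc hmono hrange hl hx
  simpa [breakpoint_succ_of_le (le_refl m)] using hb (show l + 1 ≤ m + 1 by omega)

/-- On a monitored interval the two labels have total measure `2` and each less than `1 + δ`,
so their difference is less than `2δ`. -/
lemma abs_signedLength_sub_lt (h : CutBalanced n δ c) (hmono : Monotone c)
    (hrange : ∀ i, c i ∈ Set.Icc (0 : ℝ) n) {j : ℕ} (hj2 : 2 ≤ j) (hjn : j ≤ n) :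
    |signedLength (breakpoint n c) (m + 1) j - signedLength (breakpoint n c) (m + 1) (j - 2)|
      < 2 * δ := by
  set b := breakpoint n c
  have hb : Monotone b := breakpoint_mono hmono hrange
  have hj2' : (2 : ℝ) ≤ j := by exact_mod_cast hj2
  have hjn' : (j : ℝ) ≤ n := by exact_mod_cast hjn
  set ov : ℕ → ℝ := fun l =>
    (min (b (l + 1)) j - min (b l) j) - (min (b (l + 1)) (j - 2) - min (b l) (j - 2))
  have hov (l : ℕ) : 0 ≤ ov l :=
    sub_nonneg.2 (monotone_min_sub_min (hb l.le_succ) (by linarith))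
  have htotal : ∑ l ∈ range (m + 1), ov l = 2 := by
    rw [sum_sub_distrib, sum_range_sub (fun l => min (b l) (j : ℝ)),
      sum_range_sub (fun l => min (b l) ((j : ℝ) - 2))]
    simp only [b, breakpoint_succ_of_le (le_refl m), breakpoint_zero]
    rw [min_eq_right hjn', min_eq_left (by linarith), min_eq_right (by linarith),
      min_eq_left (by linarith)]
    ring
  have hpart (s : Bool) (S : Finset ℕ) (hS : ∀ l ∈ S, l ≤ m ∧ decide (Even l) = s) :
      ∑ l ∈ S, ov l < 1 + δ := by
    have := (sum_volume_inter_le_labelMeasure hmono hrange hS).trans_lt (h j hj2 hjn s)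
    rw [sum_congr rfl fun l _ => volume_Ioc_inter_Ioc (hb l.le_succ) (by linarith),
      ← ENNReal.ofReal_sum_of_nonneg fun l _ => hov l] at this
    exact (ENNReal.ofReal_lt_ofReal_iff'.1 this).1
  have heven := hpart true ((range (m + 1)).filter Even) fun l hl => by
    simp only [mem_filter, mem_range] at hl
    exact ⟨by omega, decide_eq_true hl.2⟩
  have hodd := hpart false ((range (m + 1)).filter (¬ Even ·)) fun l hl => by
    simp only [mem_filter, mem_range] at hl
    exact ⟨by omega, decide_eq_false hl.2⟩
  have hsplit := sum_filter_add_sum_filter_not (range (m + 1)) Even ov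
  have hdiff : signedLength b (m + 1) j - signedLength b (m + 1) (j - 2)
      = ∑ l ∈ (range (m + 1)).filter Even, ov l
        - ∑ l ∈ (range (m + 1)).filter (¬ Even ·), ov l := by
    rw [signedLength_sub, ← sum_filter_add_sum_filter_not (range (m + 1)) Even,
      sub_eq_add_neg (∑ l ∈ (range (m + 1)).filter Even, ov l), ← sum_neg_distrib]
    congr 1 <;> refine sum_congr rfl fun l hl => ?_
    · rw [(mem_filter.1 hl).2.neg_one_pow, one_mul]
    · rw [(Nat.not_even_iff_odd.1 (mem_filter.1 hl).2).neg_one_pow, neg_one_mul]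
  rw [hdiff, abs_lt]
  constructor <;> linarith

lemma one_sub_le_breakpoint_succ_sub (h : CutBalanced n δ c) (hmono : Monotone c)
    (hrange : ∀ i, c i ∈ Set.Icc (0 : ℝ) n) (hm : m ≤ n) (hδ0 : 0 ≤ δ) (hδ : δ < 1) {i : ℕ}
    (hi : i + 2 ≤ m) :
    1 - 2 * n * δ ≤ breakpoint n c (i + 2) - breakpoint n c (i + 1) := by
  set b := breakpoint n c
  set D := signedLength b (m + 1)
  have hb : Monotone b := breakpoint_mono hmono hrange
  have hgap {l : ℕ} (hl : l ≤ m) : b (l + 1) - b l ≤ 1 + 2 * δ :=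
    h.breakpoint_succ_sub_le hmono hrange hδ0 hδ hl
  have hstart : b i - i ≤ 2 * i * δ := by
    have := sub_le_mul_of_succ_sub_le i.zero_le fun l _ hl => hgap (by omega : l ≤ m)
    simp only [b, breakpoint_zero, Nat.sub_zero] at this
    linarith
  have hend : (i : ℝ) + 2 - 2 * (n - i - 2) * δ ≤ b (i + 3) := by
    have := sub_le_mul_of_succ_sub_le (i := i + 3) (k := m + 1) (by omega)
      fun l _ hl => hgap (by omega : l ≤ m)
    have hcount : ((m + 1 - (i + 3) : ℕ) : ℝ) ≤ n - i - 2 := by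
      rw [Nat.cast_sub (by omega)]
      push_cast
      linarith [(Nat.cast_le (α := ℝ)).2 hm]
    have htop : b (m + 1) = n := breakpoint_succ_of_le (le_refl m)
    rw [htop] at this
    have := mul_le_mul_of_nonneg_right hcount (by linarith : (0 : ℝ) ≤ 1 + 2 * δ)
    linarith
  have hwindow : |D (i + 2) - D i| < 2 * δ := by
    have := h.abs_signedLength_sub_lt hmono hrange (j := i + 2) (by omega) (by omega)
    push_cast at this
    rwa [add_sub_cancel_right] at this
  have hpieces : D (b (i + 3)) - D (b i)
      = (-1) ^ i * ((b (i + 1) - b i) - (b (i + 2) - b (i + 1)) + (b (i + 3) - b (i + 2))) := by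
    have h0 := signedLength_succ_sub hb (N := m + 1) (l := i) (by omega)
    have h1 := signedLength_succ_sub hb (N := m + 1) (l := i + 1) (by omega)
    have h2 := signedLength_succ_sub hb (N := m + 1) (l := i + 2) (by omega)
    rw [pow_succ] at h1
    rw [pow_succ, pow_succ] at h2
    linear_combination h0 + h1 + h2
  have hsigned : (b (i + 1) - b i) - (b (i + 2) - b (i + 1)) + (b (i + 3) - b (i + 2))
      ≤ |D (b (i + 3)) - D (b i)| := by
    rw [hpieces, abs_mul, abs_pow, abs_neg, abs_one, one_pow, one_mul]
    exact le_abs_self _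
  have htri₁ := abs_sub_le (D (b (i + 3))) (D (i + 2)) (D (b i))
  have htri₂ := abs_sub_le (D (i + 2)) (D i) (D (b i))
  have hlip₁ : |D (b (i + 3)) - D (i + 2)| ≤ |b (i + 3) - (i + 2)| :=
    abs_signedLength_sub_le hb _ _
  have hlip₂ : |D i - D (b i)| ≤ |b i - i| := by
    rw [abs_sub_comm]
    exact abs_signedLength_sub_le hb _ _
  have hiδ : 0 ≤ (i : ℝ) * δ := by positivity
  have hnδ : ((i : ℝ) + 2) * δ ≤ n * δ :=
    mul_le_mul_of_nonneg_right (by exact_mod_cast (by omega : i + 2 ≤ n)) hδ0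
  rcases abs_cases (b i - i) with ⟨hA, _⟩ | ⟨hA, _⟩ <;>
    rcases abs_cases (b (i + 3) - (i + 2)) with ⟨hB, _⟩ | ⟨hB, _⟩ <;>
    linarith

end CutBalanced

theorem stmt0_general (n : ℕ) (δ : ℝ) (hδ0 : 0 < δ) (hδ1 : δ < 1 / (2 * n))
    (m : ℕ) (hm : m ≤ n) (c : Fin m → ℝ) (hmono : Monotone c)
    (hrange : ∀ i, c i ∈ Set.Icc (0 : ℝ) n)
    (hmeas : ∀ j : ℕ, 2 ≤ j → j ≤ n → ∀ s : Bool,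
      labelMeasure c j s < ENNReal.ofReal (1 + δ)) :
    n - 1 ≤ m ∧
      ∀ (i : ℕ) (hi : i + 1 < m),
        1 - 2 * n * δ ≤ c ⟨i + 1, hi⟩ - c ⟨i, Nat.lt_of_succ_lt hi⟩ ∧
        c ⟨i + 1, hi⟩ - c ⟨i, Nat.lt_of_succ_lt hi⟩ ≤ 1 + 2 * δ := by
  have hbal : CutBalanced n δ c := hmeas
  have hn : (1 : ℝ) ≤ n := by
    rcases Nat.eq_zero_or_pos n with rfl | hn
    · norm_num at hδ1; linarith
    · exact_mod_cast hn
  have hnδ : 2 * n * δ < 1 := by rwa [lt_div_iff₀ (by positivity), mul_comm] at hδ1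
  have hδ : δ < 1 := by nlinarith
  have hgap {l : ℕ} (hl : l ≤ m) := hbal.breakpoint_succ_sub_le hmono hrange hδ0.le hδ hl
  refine ⟨?_, fun i hi => ?_⟩
  · by_contra! hlt
    have htotal := sub_le_mul_of_succ_sub_le (m + 1).zero_le
      fun l _ hl => hgap (by omega : l ≤ m)
    rw [breakpoint_succ_of_le (le_refl m), breakpoint_zero] at htotal
    have : (m : ℝ) + 2 ≤ n := by exact_mod_cast (by omega : m + 2 ≤ n)
    push_cast at htotal
    nlinarith
  · rw [← breakpoint_succ_of_lt (n := n) (c := c) hi,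
      ← breakpoint_succ_of_lt (n := n) (c := c) (Nat.lt_of_succ_lt hi)]
    exact ⟨hbal.one_sub_le_breakpoint_succ_sub hmono hrange hm hδ0.le hδ hi, hgap (by omega)⟩

theorem stmt0 (n : ℕ) (hn : 2 ≤ n) (δ : ℝ) (hδ0 : 0 < δ) (hδ1 : δ < 1 / (2 * n))
    (m : ℕ) (hm : m ≤ n) (c : Fin m → ℝ) (hmono : Monotone c)
    (hrange : ∀ i, c i ∈ Set.Icc (0 : ℝ) n)
    (hmeas : ∀ j : ℕ, 2 ≤ j → j ≤ n → ∀ s : Bool,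
      labelMeasure c j s < ENNReal.ofReal (1 + δ)) :
    n - 1 ≤ m ∧
      ∀ (i : ℕ) (hi : i + 1 < m),
        1 - 2 * n * δ ≤ c ⟨i + 1, hi⟩ - c ⟨i, Nat.lt_of_succ_lt hi⟩ ∧
        c ⟨i + 1, hi⟩ - c ⟨i, Nat.lt_of_succ_lt hi⟩ ≤ 1 + 2 * δ :=
  stmt0_general n δ hδ0 hδ1 m hm c hmono hrange hmeas
end

section
/- Let n ≥ 2 be an integer, let δ be a real number with 0 < δ < 1/(2n), and let k, ℓ be integers with 2 ≤ k and 0 ≤ ℓ ≤ n − k. Let c_1 ≤ … ≤ c_m be a cut configuration in [0,n] such that at most k−2 of the cuts lie in the interval [ℓ, ℓ+k]. Then there exist an integer j with 2 ≤ j ≤ n and a closed interval J of length at least 1+δ with J ⊆ [ℓ, ℓ+k], J ⊆ [j−2, j], and no cut in the interior of J; in particular, some label has measure at least 1+δ on the monitored interval [j−2,j]. -/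
/-!
At most `k - 2` cuts meet `[ℓ, ℓ + k]`, so they split it into at most `k - 1` cut-free pieces and
one of them has length at least `k / (k - 1) > 1 + 2δ`, because `2δ (k - 1) < (k - 1) / n < 1`.
A cut-free interval `[u, v] ⊆ [0, n]` of length `≥ 1 + 2δ` meets `[j - 2, j]` in length `≥ 1 + δ`
for every integer `j ∈ [u + 1 + δ, v + 1 - δ]`, a range of length `≥ 1`; on that intersection the
labelling is constant.
-/

open Set
open scoped Finset

theorem exists_gap_of_finset (T : Finset ℝ) {a b : ℝ} (hab : a ≤ b) :
    ∃ u v, a ≤ u ∧ v ≤ b ∧ b - a ≤ (#T + 1) * (v - u) ∧ ∀ x ∈ T, x ∉ Ioo u v := by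
  induction T using Finset.induction_on_max generalizing b with
  | empty => exact ⟨a, b, le_rfl, le_rfl, by simp, by simp⟩
  | insert t T hlt ih =>
    rw [Finset.card_insert_of_notMem fun ht => (hlt t ht).false]
    push_cast
    by_cases ht : t ∈ Ioo a b
    · obtain ⟨u, v, hau, hvt, hlen, hT⟩ := ih ht.1.le
      have hv : v ≤ b := hvt.trans ht.2.le
      have huv : u ≤ v := by nlinarith [ht.1, Nat.cast_nonneg (α := ℝ) #T]
      by_cases hshort : b - t ≤ v - u
      · refine ⟨u, v, hau, hv, by linarith, ?_⟩
        rintro x hx ⟨hux, hxv⟩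
        rcases Finset.mem_insert.mp hx with rfl | hx
        · linarith
        · exact hT x hx ⟨hux, hxv⟩
      · have : (#T + 1 : ℝ) * (v - u) ≤ (#T + 1) * (b - t) :=
          mul_le_mul_of_nonneg_left (by linarith) (by positivity)
        refine ⟨t, b, ht.1.le, le_rfl, by linarith, ?_⟩
        rintro x hx ⟨htx, -⟩
        rcases Finset.mem_insert.mp hx with rfl | hx
        · exact lt_irrefl x htx
        · exact lt_asymm htx (hlt x hx)
    · obtain ⟨u, v, hau, hvb, hlen, hT⟩ := ih hab
      have huv : u ≤ v := by nlinarith [Nat.cast_nonneg (α := ℝ) #T]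
      refine ⟨u, v, hau, hvb, by linarith, ?_⟩
      rintro x hx hxuv
      rcases Finset.mem_insert.mp hx with rfl | hx
      · exact ht (Ioo_subset_Ioo hau hvb hxuv)
      · exact hT x hx hxuv

theorem exists_window_of_le_sub {n : ℕ} {δ u v : ℝ} (hδ₀ : 0 < δ) (hδ₁ : δ ≤ 1) (hu : 0 ≤ u)
    (hv : v ≤ n) (hlen : 1 + 2 * δ ≤ v - u) :
    ∃ j : ℕ, 2 ≤ j ∧ j ≤ n ∧ ∃ a b : ℝ, u ≤ a ∧ b ≤ v ∧ (j : ℝ) - 2 ≤ a ∧ b ≤ j ∧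
      1 + δ ≤ b - a := by
  set j := ⌈u + 1 + δ⌉₊
  have hj_ge : u + 1 + δ ≤ j := Nat.le_ceil _
  have hj_lt : (j : ℝ) < u + 1 + δ + 1 := Nat.ceil_lt_add_one (by positivity)
  refine ⟨j, Nat.lt_ceil.mpr (by push_cast; linarith), ?_,
    max u (j - 2), min v j, le_max_left _ _, min_le_left _ _, le_max_right _ _, min_le_right _ _,
    ?_⟩
  · exact Nat.lt_add_one_iff.mp (by exact_mod_cast (by linarith : (j : ℝ) < n + 1))
  · rw [le_sub_iff_add_le', le_min_iff, ← le_sub_iff_add_le, ← le_sub_iff_add_le, max_le_iff,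
      max_le_iff]
    exact ⟨⟨by linarith, by linarith⟩, by linarith, by linarith⟩

theorem cutLabel_eq_of_mem_Ioc_s1 {m : ℕ} {c : Fin m → ℝ} {a b x : ℝ}
    (hcut : ∀ i, c i ∉ Ioo a b) (hx : x ∈ Ioc a b) : cutLabel c x = cutLabel c b := by
  have : ∀ i, c i < x ↔ c i < b := fun i =>
    ⟨fun h => h.trans_le hx.2, fun h => not_le.mp fun hxc => hcut i ⟨hx.1.trans_le hxc, h⟩⟩
  simp only [cutLabel, this]

theorem exists_ofReal_sub_le_labelMeasure {m : ℕ} (c : Fin m → ℝ) {j : ℕ} {a b : ℝ}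
    (hsub : Icc a b ⊆ Icc ((j : ℝ) - 2) j) (hcut : ∀ i, c i ∉ Ioo a b) :
    ∃ s, ENNReal.ofReal (b - a) ≤ labelMeasure c j s := by
  refine ⟨cutLabel c b, ?_⟩
  rw [← Real.volume_Ioc]
  exact MeasureTheory.measure_mono fun x hx =>
    ⟨hsub (Ioc_subset_Icc_self hx), cutLabel_eq_of_mem_Ioc_s1 hcut hx⟩

theorem stmt1_general (n : ℕ) (δ : ℝ) (hδ0 : 0 < δ) (hδ1 : δ < 1 / (2 * n))
    (k ℓ : ℕ) (hk : 2 ≤ k) (hkl : ℓ + k ≤ n)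
    (m : ℕ) (c : Fin m → ℝ)
    (hcuts : Nat.card {i : Fin m // (ℓ : ℝ) ≤ c i ∧ c i ≤ (ℓ : ℝ) + k} ≤ k - 2) :
    ∃ j : ℕ, 2 ≤ j ∧ j ≤ n ∧
      ∃ a b : ℝ, 1 + δ ≤ b - a ∧
        Set.Icc a b ⊆ Set.Icc (ℓ : ℝ) ((ℓ : ℝ) + k) ∧
        Set.Icc a b ⊆ Set.Icc ((j : ℝ) - 2) (j : ℝ) ∧
        (∀ i, c i ∉ Set.Ioo a b) ∧
        ∃ s : Bool, ENNReal.ofReal (1 + δ) ≤ labelMeasure c j s := by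
  classical
  set T := (Finset.univ.filter fun i : Fin m => (ℓ : ℝ) ≤ c i ∧ c i ≤ ℓ + k).image c
  have hT : (#T : ℝ) + 1 ≤ k - 1 := by
    have : #T ≤ k - 2 := Finset.card_image_le.trans (by simpa [Fintype.card_subtype] using hcuts)
    have : #T + 2 ≤ k := by omega
    have : (#T : ℝ) + 2 ≤ k := by exact_mod_cast this
    linarith
  obtain ⟨u, v, hℓu, hvk, hgap, hfree⟩ := exists_gap_of_finset T (by linarith : (ℓ : ℝ) ≤ ℓ + k)
  have hℓkn : (ℓ : ℝ) + k ≤ n := by exact_mod_cast hkl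
  have hδk : 2 * δ * (#T + 1) < 1 := by
    rw [lt_div_iff₀ (by linarith)] at hδ1
    nlinarith [Nat.cast_nonneg (α := ℝ) #T]
  have hδ_le_one : δ ≤ 1 := by nlinarith [Nat.cast_nonneg (α := ℝ) #T]
  have hlen : 1 + 2 * δ ≤ v - u := by nlinarith [Nat.cast_nonneg (α := ℝ) #T]
  obtain ⟨j, hj2, hjn, a, b, hua, hbv, hja, hbj, hab⟩ := exists_window_of_le_sub hδ0 hδ_le_one
    ((Nat.cast_nonneg ℓ).trans hℓu) (hvk.trans hℓkn) hlen
  have hcut : ∀ i, c i ∉ Ioo a b := fun i hi =>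
    hfree (c i) (Finset.mem_image_of_mem c (Finset.mem_filter.mpr
      ⟨Finset.mem_univ i, by linarith [hi.1], by linarith [hi.2]⟩))
      (Ioo_subset_Ioo hua hbv hi)
  refine ⟨j, hj2, hjn, a, b, hab, Icc_subset_Icc (hℓu.trans hua) (hbv.trans hvk),
    Icc_subset_Icc hja hbj, hcut, ?_⟩
  obtain ⟨s, hs⟩ := exists_ofReal_sub_le_labelMeasure c (Icc_subset_Icc hja hbj) hcut
  exact ⟨s, (ENNReal.ofReal_le_ofReal hab).trans hs⟩

theorem stmt1 (n : ℕ) (hn : 2 ≤ n) (δ : ℝ) (hδ0 : 0 < δ) (hδ1 : δ < 1 / (2 * n))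
    (k ℓ : ℕ) (hk : 2 ≤ k) (hkl : ℓ + k ≤ n)
    (m : ℕ) (c : Fin m → ℝ) (hmono : Monotone c)
    (hrange : ∀ i, c i ∈ Set.Icc (0 : ℝ) n)
    (hcuts : Nat.card {i : Fin m // (ℓ : ℝ) ≤ c i ∧ c i ≤ (ℓ : ℝ) + k} ≤ k - 2) :
    ∃ j : ℕ, 2 ≤ j ∧ j ≤ n ∧
      ∃ a b : ℝ, 1 + δ ≤ b - a ∧
        Set.Icc a b ⊆ Set.Icc (ℓ : ℝ) ((ℓ : ℝ) + k) ∧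
        Set.Icc a b ⊆ Set.Icc ((j : ℝ) - 2) (j : ℝ) ∧
        (∀ i, c i ∉ Set.Ioo a b) ∧
        ∃ s : Bool, ENNReal.ofReal (1 + δ) ≤ labelMeasure c j s :=
  stmt1_general n δ hδ0 hδ1 k ℓ hk hkl m c hcuts
end

section
/- Let n ≥ 2 be an integer and let δ be a real number with 0 < δ < 1/(2n). Let c_1 ≤ … ≤ c_m be a cut configuration in [0,n]. If two consecutive cuts satisfy c_{i+1} − c_i > 1 + 2δ, then there exist an integer j with 2 ≤ j ≤ n and a label s ∈ {+,−} such that the measure of s on the monitored interval [j−2,j] is at least 1+δ; indeed, there is an uncut subinterval of [j−2,j] of length at least 1+δ. -/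
/-
Between two consecutive cuts `A < B` there are no cuts, so the labelling is constant on `(A, B)`.
Put `ℓ = 1 + δ` and `j = ⌈A + ℓ⌉`. Since `A + ℓ ≤ j < A + ℓ + 1` and `B - A > 2ℓ - 1`, the
interval `[max A (j - 2), min B j]` has length at least `ℓ` as long as `ℓ ≤ 2`, and `0 ≤ A`,
`B ≤ n` force `2 ≤ j ≤ n`.
-/

open Set MeasureTheory

theorem exists_nat_window_of_gap {n : ℕ} {A B ℓ : ℝ} (hA : 0 ≤ A) (hB : B ≤ n)
    (hℓ₁ : 1 < ℓ) (hℓ₂ : ℓ ≤ 2) (hgap : 2 * ℓ - 1 ≤ B - A) :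
    ∃ j : ℕ, 2 ≤ j ∧ j ≤ n ∧ ∃ a b : ℝ, ℓ ≤ b - a ∧
      Icc a b ⊆ Icc ((j : ℝ) - 2) j ∧ A ≤ a ∧ b ≤ B := by
  set j : ℕ := ⌈A + ℓ⌉₊
  have hj_ge : A + ℓ ≤ j := Nat.le_ceil _
  have hj_lt : (j : ℝ) < A + ℓ + 1 := Nat.ceil_lt_add_one (by linarith)
  have h2j : 2 ≤ j := by
    have : (1 : ℝ) < j := by linarith
    exact_mod_cast this
  have hjn : j ≤ n := by
    have : (j : ℝ) < n + 1 := by linarith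
    exact Nat.lt_add_one_iff.mp (by exact_mod_cast this)
  refine ⟨j, h2j, hjn, max A (j - 2), min B j, ?_,
    Icc_subset_Icc (le_max_right _ _) (min_le_right _ _), le_max_left _ _, min_le_left _ _⟩
  have : max A ((j : ℝ) - 2) + ℓ ≤ min B j := by
    rw [← max_add_add_right]
    exact max_le (le_min (by linarith) (by linarith)) (le_min (by linarith) (by linarith))
  linarith

theorem Monotone.notMem_Ioo_consecutive {α : Type*} [Preorder α] {m : ℕ} {c : Fin m → α}
    (hc : Monotone c)
    {i : ℕ} (hi : i + 1 < m) (k : Fin m) :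
    c k ∉ Ioo (c ⟨i, Nat.lt_of_succ_lt hi⟩) (c ⟨i + 1, hi⟩) := by
  rintro ⟨hlo, hhi⟩
  rcases le_or_gt (k : ℕ) i with h | h
  · exact (hc (Fin.le_def.mpr h)).not_gt hlo
  · exact (hc (show (⟨i + 1, hi⟩ : Fin m) ≤ k from h)).not_gt hhi

theorem cutLabel_eq_of_forall_notMem_Ico {m : ℕ} {c : Fin m → ℝ} {x y : ℝ} (hxy : x ≤ y)
    (h : ∀ k, c k ∉ Ico x y) : cutLabel c x = cutLabel c y := by
  unfold cutLabel
  rw [Nat.card_congr (Equiv.subtypeEquivRight fun k =>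
    ⟨fun hk => hk.trans_le hxy, fun hk => not_le.mp fun hxk => h k ⟨hxk, hk⟩⟩)]

theorem ofReal_le_labelMeasure_of_uncut {m : ℕ} {c : Fin m → ℝ} {j : ℕ} {a b : ℝ}
    (hsub : Icc a b ⊆ Icc ((j : ℝ) - 2) j) (huncut : ∀ k, c k ∉ Ioo a b) :
    ENNReal.ofReal (b - a) ≤ labelMeasure c j (cutLabel c b) := by
  have hlabel : ∀ x ∈ Ioo a b, cutLabel c x = cutLabel c b := fun x hx =>
    cutLabel_eq_of_forall_notMem_Ico hx.2.le fun k hk =>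
      huncut k ⟨hx.1.trans_le hk.1, hk.2⟩
  calc ENNReal.ofReal (b - a) = volume (Ioo a b) := Real.volume_Ioo.symm
    _ ≤ labelMeasure c j (cutLabel c b) :=
      measure_mono fun x hx => ⟨hsub (Ioo_subset_Icc_self hx), hlabel x hx⟩

theorem stmt3_general (n : ℕ) (δ : ℝ) (hδ0 : 0 < δ) (hδ1 : δ < 1 / (2 * n))
    (m : ℕ) (c : Fin m → ℝ) (hmono : Monotone c)
    (hrange : ∀ i, c i ∈ Set.Icc (0 : ℝ) n)
    (i : ℕ) (hi : i + 1 < m)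
    (hgap : 1 + 2 * δ < c ⟨i + 1, hi⟩ - c ⟨i, Nat.lt_of_succ_lt hi⟩) :
    ∃ j : ℕ, 2 ≤ j ∧ j ≤ n ∧
      (∃ s : Bool, ENNReal.ofReal (1 + δ) ≤ labelMeasure c j s) ∧
      ∃ a b : ℝ, 1 + δ ≤ b - a ∧
        Set.Icc a b ⊆ Set.Icc ((j : ℝ) - 2) (j : ℝ) ∧
        ∀ i', c i' ∉ Set.Ioo a b := by
  have hδ_le : δ ≤ 1 := by
    rcases Nat.eq_zero_or_pos n with rfl | hn
    · simp only [Nat.cast_zero, mul_zero, div_zero] at hδ1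
      linarith
    · have hn1 : (1 : ℝ) ≤ n := by exact_mod_cast hn
      have : 1 / (2 * (n : ℝ)) ≤ 1 / 2 := one_div_le_one_div_of_le (by norm_num) (by linarith)
      linarith
  obtain ⟨j, h2j, hjn, a, b, hab, hsub, hAa, hbB⟩ :=
    exists_nat_window_of_gap (ℓ := 1 + δ) (hrange ⟨i, Nat.lt_of_succ_lt hi⟩).1
      (hrange ⟨i + 1, hi⟩).2 (by linarith) (by linarith) (by linarith)
  have huncut : ∀ k, c k ∉ Ioo a b := fun k hk =>
    hmono.notMem_Ioo_consecutive hi k (Ioo_subset_Ioo hAa hbB hk)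
  exact ⟨j, h2j, hjn,
    ⟨cutLabel c b,
      (ENNReal.ofReal_le_ofReal hab).trans (ofReal_le_labelMeasure_of_uncut hsub huncut)⟩,
    a, b, hab, hsub, huncut⟩

theorem stmt3 (n : ℕ) (hn : 2 ≤ n) (δ : ℝ) (hδ0 : 0 < δ) (hδ1 : δ < 1 / (2 * n))
    (m : ℕ) (c : Fin m → ℝ) (hmono : Monotone c)
    (hrange : ∀ i, c i ∈ Set.Icc (0 : ℝ) n)
    (i : ℕ) (hi : i + 1 < m)
    (hgap : 1 + 2 * δ < c ⟨i + 1, hi⟩ - c ⟨i, Nat.lt_of_succ_lt hi⟩) :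
    ∃ j : ℕ, 2 ≤ j ∧ j ≤ n ∧
      (∃ s : Bool, ENNReal.ofReal (1 + δ) ≤ labelMeasure c j s) ∧
      ∃ a b : ℝ, 1 + δ ≤ b - a ∧
        Set.Icc a b ⊆ Set.Icc ((j : ℝ) - 2) (j : ℝ) ∧
        ∀ i', c i' ∉ Set.Ioo a b :=
  stmt3_general n δ hδ0 hδ1 m c hmono hrange i hi hgap
end

section
/- Let n ≥ 2 be an integer and let δ be a real number with 0 < δ < 1/(2n). Let c_1 ≤ … ≤ c_m be a cut configuration in [0,n] with m ≤ n. If two consecutive cuts satisfy c_{i+1} − c_i < 1 − 2nδ, then there exist an integer j with 2 ≤ j ≤ n and a label s ∈ {+,−} such that the measure of s on the monitored interval [j−2,j] is at least 1+δ. -/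
/-!
Pad the cuts with `0` and `n`; the labelling is then constant on each stretch between consecutive
points, with the parity of the stretch's index. If some stretch has length at least `1 + 2δ`, a
window `[j - 2, j]` placed on it sees `1 + δ` of a single label. Otherwise every stretch is shorter
than `1 + 2δ`, so the `i`-th point lies below `i (1 + 2δ)` and the `(i+3)`-rd above
`n - (n - i - 2)(1 + 2δ)`. The short gap between cuts `i` and `i + 1` then leaves more than
`1 + 4δ` of the window `[i, i + 2]` to the two neighbouring stretches, which carry the same label.
-/

open Set MeasureTheory

/-- Stretch `t` is `[cutPoint n c t, cutPoint n c (t + 1)]`; its points carry label `Even t`. -/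
noncomputable def cutPoint (n : ℕ) {m : ℕ} (c : Fin m → ℝ) : ℕ → ℝ
  | 0 => 0
  | t + 1 => if h : t < m then c ⟨t, h⟩ else n

noncomputable def windowClip (j : ℕ) (x : ℝ) : ℝ :=
  projIcc ((j : ℝ) - 2) j (sub_le_self _ zero_le_two) x

noncomputable def clippedLength (n : ℕ) {m : ℕ} (c : Fin m → ℝ) (j t : ℕ) : ℝ :=
  windowClip j (cutPoint n c (t + 1)) - windowClip j (cutPoint n c t)

section WindowClip

variable {j : ℕ} {x y u : ℝ}

lemma monotone_windowClip : Monotone (windowClip j) :=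
  fun _ _ h => Subtype.mono_coe _ (monotone_projIcc _ h)

lemma windowClip_mem : windowClip j x ∈ Icc ((j : ℝ) - 2) j :=
  Subtype.mem _

lemma windowClip_of_mem (hx : x ∈ Icc ((j : ℝ) - 2) j) : windowClip j x = x := by
  simp [windowClip, projIcc_of_mem _ hx]

lemma windowClip_sub_windowClip_le (hxy : x ≤ y) : windowClip j y - windowClip j x ≤ y - x := by
  have := abs_projIcc_sub_projIcc (h := sub_le_self ((j : ℝ)) zero_le_two) (c := y) (d := x)
  rw [abs_of_nonneg (sub_nonneg.2 hxy)] at this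
  exact (le_abs_self _).trans this

lemma windowClip_le_of_le (hj : (j : ℝ) - 2 ≤ u) (hx : x ≤ u) : windowClip j x ≤ u :=
  max_le hj ((min_le_right _ _).trans hx)

lemma le_windowClip_of_le (hj : u ≤ j) (hx : u ≤ x) : u ≤ windowClip j x :=
  le_max_of_le_right (le_min hj hx)

end WindowClip

lemma le_add_mul_of_forall_sub_le {f : ℕ → ℝ} {L : ℝ} {a d : ℕ}
    (h : ∀ k < d, f (a + k + 1) - f (a + k) ≤ L) : f (a + d) ≤ f a + d * L := by
  induction d with
  | zero => simp
  | succ d ih =>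
    have hlast := h d d.lt_succ_self
    have hprev := ih fun k hk => h k (hk.trans d.lt_succ_self)
    rw [← add_assoc]
    push_cast
    linarith

section CutPoint

variable {n m : ℕ} {c : Fin m → ℝ}

@[simp]
lemma cutPoint_zero : cutPoint n c 0 = 0 := rfl

lemma cutPoint_succ_of_lt {t : ℕ} (h : t < m) : cutPoint n c (t + 1) = c ⟨t, h⟩ := dif_pos h

lemma cutPoint_succ_val (i : Fin m) : cutPoint n c (i + 1) = c i := cutPoint_succ_of_lt i.2

lemma cutPoint_of_lt {t : ℕ} (h : m < t) : cutPoint n c t = n := by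
  obtain ⟨t, rfl⟩ := Nat.exists_eq_add_one_of_ne_zero (by omega : t ≠ 0)
  exact dif_neg (by omega)

lemma cutPoint_mem_Icc (hrange : ∀ i, c i ∈ Icc (0 : ℝ) n) (t : ℕ) :
    cutPoint n c t ∈ Icc (0 : ℝ) n := by
  rcases t with _ | t
  · exact ⟨le_rfl, Nat.cast_nonneg n⟩
  · by_cases h : t < m
    · rw [cutPoint_succ_of_lt h]; exact hrange _
    · rw [cutPoint_of_lt (by omega)]; exact ⟨Nat.cast_nonneg n, le_rfl⟩

lemma monotone_cutPoint (hmono : Monotone c) (hrange : ∀ i, c i ∈ Icc (0 : ℝ) n) :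
    Monotone (cutPoint n c) := by
  refine monotone_nat_of_le_succ fun t => ?_
  rcases t with _ | t
  · exact (cutPoint_mem_Icc hrange 1).1
  · by_cases h : t + 1 < m
    · rw [cutPoint_succ_of_lt h, cutPoint_succ_of_lt (by omega : t < m)]
      exact hmono (Fin.mk_le_mk.2 (Nat.le_succ t))
    · rw [cutPoint_of_lt (by omega : m < t + 1 + 1)]
      exact (cutPoint_mem_Icc hrange _).2

lemma cutLabel_eq_of_mem_Ioo (hmono : Monotone c) (hrange : ∀ i, c i ∈ Icc (0 : ℝ) n) {t : ℕ}
    {y : ℝ} (hy : y ∈ Ioo (cutPoint n c t) (cutPoint n c (t + 1))) :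
    cutLabel c y = decide (Even t) := by
  have hx := monotone_cutPoint hmono hrange
  rcases lt_or_ge m t with htm | htm
  · rw [cutPoint_of_lt htm, cutPoint_of_lt (by omega)] at hy
    exact absurd (hy.1.trans hy.2) (lt_irrefl _)
  have hbelow : ∀ i : Fin m, c i < y ↔ (i : ℕ) < t := by
    intro i
    rw [← cutPoint_succ_val (n := n) (c := c) i]
    constructor
    · intro h
      by_contra hle
      exact (hy.2.trans_le (hx (Nat.succ_le_succ (not_lt.1 hle)))).not_gt h
    · exact fun h => (hx h).trans_lt hy.1
  have hcard : Nat.card {i : Fin m // c i < y} = t := by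
    rw [Nat.card_congr (Equiv.subtypeEquivRight hbelow), Nat.card_eq_fintype_card]
    exact Fintype.card_fin_lt_of_le htm
  rw [cutLabel, hcard]

lemma ofReal_sum_clippedLength_le_labelMeasure (hmono : Monotone c)
    (hrange : ∀ i, c i ∈ Icc (0 : ℝ) n) {j : ℕ} {s : Bool} {T : Finset ℕ}
    (hT : ∀ t ∈ T, decide (Even t) = s) :
    ENNReal.ofReal (∑ t ∈ T, clippedLength n c j t) ≤ labelMeasure c j s := by
  set f : ℕ → ℝ := fun t => windowClip j (cutPoint n c t)
  have hf : Monotone f := monotone_windowClip.comp (monotone_cutPoint hmono hrange)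
  have hdisj : (T : Set ℕ).PairwiseDisjoint fun t => Ioo (f t) (f (t + 1)) :=
    hf.pairwise_disjoint_on_Ioo_succ.set_pairwise _
  have hsub : ∀ t ∈ T, Ioo (f t) (f (t + 1)) ⊆
      {x : ℝ | x ∈ Icc ((j : ℝ) - 2) j ∧ cutLabel c x = s} := by
    intro t ht y hy
    have hyj : y ∈ Icc ((j : ℝ) - 2) j :=
      ⟨windowClip_mem.1.trans hy.1.le, hy.2.le.trans windowClip_mem.2⟩
    -- `windowClip j` fixes `y`, so it cannot map a point on the wrong side of `y` past it
    have hy' : y ∈ Ioo (cutPoint n c t) (cutPoint n c (t + 1)) := by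
      refine ⟨lt_of_not_ge fun h => hy.1.not_ge ?_, lt_of_not_ge fun h => hy.2.not_ge ?_⟩
      · rw [← windowClip_of_mem hyj]; exact monotone_windowClip h
      · rw [← windowClip_of_mem hyj]; exact monotone_windowClip h
    exact ⟨hyj, (cutLabel_eq_of_mem_Ioo hmono hrange hy').trans (hT t ht)⟩
  calc ENNReal.ofReal (∑ t ∈ T, clippedLength n c j t)
      = ∑ t ∈ T, ENNReal.ofReal (f (t + 1) - f t) :=
        ENNReal.ofReal_sum_of_nonneg fun t _ => sub_nonneg.2 (hf t.le_succ)
    _ = ∑ t ∈ T, volume (Ioo (f t) (f (t + 1))) := by simp only [Real.volume_Ioo]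
    _ = volume (⋃ t ∈ T, Ioo (f t) (f (t + 1))) :=
        (measure_biUnion_finset hdisj fun _ _ => measurableSet_Ioo).symm
    _ ≤ labelMeasure c j s := measure_mono (iUnion₂_subset hsub)

lemma exists_window_le_clippedLength (hrange : ∀ i, c i ∈ Icc (0 : ℝ) n) {δ : ℝ} (hδ0 : 0 < δ)
    (hδ1 : δ ≤ 1) {t : ℕ} (hlong : 1 + 2 * δ ≤ cutPoint n c (t + 1) - cutPoint n c t) :
    ∃ j, 2 ≤ j ∧ j ≤ n ∧ 1 + δ ≤ clippedLength n c j t := by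
  set a := cutPoint n c t
  set b := cutPoint n c (t + 1)
  have ha : 0 ≤ a := (cutPoint_mem_Icc hrange t).1
  have hb : b ≤ n := (cutPoint_mem_Icc hrange (t + 1)).2
  set j := ⌈a + 1 + δ⌉₊
  have hj₁ : a + 1 + δ ≤ j := Nat.le_ceil _
  have hj₂ : (j : ℝ) < a + 1 + δ + 1 := Nat.ceil_lt_add_one (by linarith)
  -- `[u, u + 1 + δ]` lies in both the stretch `[a, b]` and the window `[j - 2, j]`
  set u := max a (j - 2)
  have hclip₁ : windowClip j a ≤ u := windowClip_le_of_le (le_max_right _ _) (le_max_left _ _)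
  have hu_j : u ≤ j - 1 - δ := max_le (by linarith) (by linarith)
  have hu_b : u ≤ b - 1 - δ := max_le (by linarith) (by linarith)
  have hclip₂ : u + 1 + δ ≤ windowClip j b := le_windowClip_of_le (by linarith) (by linarith)
  refine ⟨j, ?_, ?_, by unfold clippedLength; linarith⟩
  · have : 1 < j := by exact_mod_cast (by linarith : (1 : ℝ) < j)
    omega
  · have : j < n + 1 := by exact_mod_cast (by linarith : (j : ℝ) < n + 1)
    omega

lemma one_add_four_mul_le_clippedLength_add (hmono : Monotone c)
    (hrange : ∀ i, c i ∈ Icc (0 : ℝ) n) (hm : m ≤ n) {δ : ℝ} (hδ : 0 ≤ δ)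
    (hshort : ∀ t, cutPoint n c (t + 1) - cutPoint n c t ≤ 1 + 2 * δ) {i : ℕ} (hi : i + 1 < m)
    (hgap : cutPoint n c (i + 2) - cutPoint n c (i + 1) ≤ 1 - 2 * n * δ) :
    1 + 4 * δ ≤ clippedLength n c (i + 2) i + clippedLength n c (i + 2) (i + 2) := by
  set x := cutPoint n c
  have hleft : x i ≤ i * (1 + 2 * δ) := by
    simpa [x] using le_add_mul_of_forall_sub_le (f := x) (a := 0) (d := i) fun k _ => hshort _
  obtain ⟨d, hd⟩ : ∃ d, m + 1 = i + 3 + d := ⟨m - i - 2, by omega⟩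
  have hright : x (m + 1) ≤ x (i + 3) + d * (1 + 2 * δ) :=
    hd ▸ le_add_mul_of_forall_sub_le fun k _ => hshort _
  rw [show x (m + 1) = n from cutPoint_of_lt (lt_add_one m)] at hright
  have hdn : (d : ℝ) + i + 2 ≤ n := by exact_mod_cast (show d + i + 2 ≤ n by omega)
  have hdδ : (d : ℝ) * δ ≤ (n - i - 2) * δ := mul_le_mul_of_nonneg_right (by linarith) hδ
  have hiδ : 0 ≤ (i : ℝ) * δ := mul_nonneg i.cast_nonneg hδ
  have h₁ : windowClip (i + 2) (x i) ≤ i + 2 * i * δ :=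
    windowClip_le_of_le (by push_cast; linarith) (by linarith)
  have h₂ : i + 2 - 2 * (n - i - 2) * δ ≤ windowClip (i + 2) (x (i + 3)) :=
    le_windowClip_of_le (by push_cast; nlinarith) (by linarith)
  have h₃ : windowClip (i + 2) (x (i + 2)) - windowClip (i + 2) (x (i + 1)) ≤ 1 - 2 * n * δ :=
    (windowClip_sub_windowClip_le (monotone_cutPoint hmono hrange (i + 1).le_succ)).trans hgap
  unfold clippedLength
  linarith

end CutPoint

theorem stmt4_general (n : ℕ) (δ : ℝ) (hδ0 : 0 < δ) (hδ1 : δ < 1 / (2 * n))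
    (m : ℕ) (hm : m ≤ n) (c : Fin m → ℝ) (hmono : Monotone c)
    (hrange : ∀ i, c i ∈ Set.Icc (0 : ℝ) n)
    (i : ℕ) (hi : i + 1 < m)
    (hgap : c ⟨i + 1, hi⟩ - c ⟨i, Nat.lt_of_succ_lt hi⟩ < 1 - 2 * n * δ) :
    ∃ j : ℕ, 2 ≤ j ∧ j ≤ n ∧
      ∃ s : Bool, ENNReal.ofReal (1 + δ) ≤ labelMeasure c j s := by
  have hδ1' : δ ≤ 1 := by
    refine hδ1.le.trans (div_le_one_of_le₀ ?_ (by positivity))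
    have : (2 : ℝ) ≤ n := by exact_mod_cast (by omega : 2 ≤ n)
    linarith
  by_cases hlong : ∃ t, 1 + 2 * δ ≤ cutPoint n c (t + 1) - cutPoint n c t
  · obtain ⟨t, ht⟩ := hlong
    obtain ⟨j, hj2, hjn, hj⟩ := exists_window_le_clippedLength hrange hδ0 hδ1' ht
    refine ⟨j, hj2, hjn, decide (Even t), ?_⟩
    calc ENNReal.ofReal (1 + δ)
        ≤ ENNReal.ofReal (∑ t' ∈ {t}, clippedLength n c j t') :=
          ENNReal.ofReal_le_ofReal (by simpa using hj)
      _ ≤ _ := ofReal_sum_clippedLength_le_labelMeasure hmono hrange (by simp)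
  · push Not at hlong
    have hgap' : cutPoint n c (i + 1 + 1) - cutPoint n c (i + 1) ≤ 1 - 2 * n * δ := by
      rw [cutPoint_succ_of_lt hi, cutPoint_succ_of_lt (by omega)]
      exact hgap.le
    have hwin := one_add_four_mul_le_clippedLength_add hmono hrange hm hδ0.le
      (fun t => (hlong t).le) hi hgap'
    refine ⟨i + 2, by omega, by omega, decide (Even i), ?_⟩
    calc ENNReal.ofReal (1 + δ)
        ≤ ENNReal.ofReal (∑ t ∈ {i, i + 2}, clippedLength n c (i + 2) t) :=
          ENNReal.ofReal_le_ofReal (by rw [Finset.sum_pair (by omega)]; linarith)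
      _ ≤ _ := ofReal_sum_clippedLength_le_labelMeasure hmono hrange (by simp [Nat.even_add])

theorem stmt4 (n : ℕ) (hn : 2 ≤ n) (δ : ℝ) (hδ0 : 0 < δ) (hδ1 : δ < 1 / (2 * n))
    (m : ℕ) (hm : m ≤ n) (c : Fin m → ℝ) (hmono : Monotone c)
    (hrange : ∀ i, c i ∈ Set.Icc (0 : ℝ) n)
    (i : ℕ) (hi : i + 1 < m)
    (hgap : c ⟨i + 1, hi⟩ - c ⟨i, Nat.lt_of_succ_lt hi⟩ < 1 - 2 * n * δ) :
    ∃ j : ℕ, 2 ≤ j ∧ j ≤ n ∧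
      ∃ s : Bool, ENNReal.ofReal (1 + δ) ≤ labelMeasure c j s :=
  stmt4_general n δ hδ0 hδ1 m hm c hmono hrange i hi hgap
end

section
/- Let n ≥ 1, and for each colour i ∈ {1,…,n} let a_i ≥ 1 be an integer and let t_{i,1}, …, t_{i,2a_i} ∈ [0,1] be the positions of the beads of colour i. Let γ : ℝ → ℝⁿ be the moment curve γ(α) = (α, α², …, αⁿ). Suppose w ∈ ℝⁿ with w ≠ 0 and b ∈ ℝ define a hyperplane that misses all lifted beads and bisects each lifted colour class: for every i and j one has ⟨w, γ(t_{i,j})⟩ ≠ b, and for every i the number of indices j with ⟨w, γ(t_{i,j})⟩ > b equals a_i. Then there exists a finite set Z ⊆ ℝ with at most n elements, containing no bead position, such that for every colour i, the number of indices j for which the cardinality of {z ∈ Z : z < t_{i,j}} is even equals a_i. (Cutting the necklace at the points of Z and giving the resulting pieces alternately to two thieves gives each thief exactly a_i beads of every colour i; thus a ham-sandwich cut of the bead sets embedded in the moment curve yields a 2-thief necklace splitting with at most n cuts.) -/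
/-- The pairing of a normal vector `w ∈ ℝⁿ` with the point `γ(x) = (x, x², …, xⁿ)`
of the moment curve. -/
def momentPairing (n : ℕ) (w : Fin n → ℝ) (x : ℝ) : ℝ :=
  ∑ k : Fin n, w k * x ^ ((k : ℕ) + 1)

/-!
Along the moment curve the hyperplane `⟨w, x⟩ = b` becomes the zero set of the nonzero real
polynomial `P = ∑ₖ wₖ X^(k+1) - b` of degree at most `n`. Choosing as cuts the real roots of `P`
of odd multiplicity, the sign of `P` at a non-root `t` is a fixed sign times `(-1)` to the number
of cuts below `t`. So the beads with an even number of cuts below them are exactly the beads on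
one fixed side of the hyperplane, and each side holds `aᵢ` beads of colour `i`.
-/

open Polynomial Finset

theorem pos_iff_pos_of_forall_ne_zero {X : Type*} [TopologicalSpace X] [PreconnectedSpace X]
    {f : X → ℝ} (hf : Continuous f) (hf0 : ∀ x, f x ≠ 0) (x y : X) : 0 < f x ↔ 0 < f y := by
  suffices key : ∀ x y, 0 < f x → 0 < f y from ⟨key x y, key y x⟩
  intro x y hx
  by_contra! hy
  obtain ⟨z, hz⟩ := intermediate_value_univ y x hf ⟨hy, hx.le⟩
  exact hf0 z hz

theorem mul_pos_iff_of_ne_zero {α : Type*} [Ring α] [LinearOrder α] [IsStrictOrderedRing α]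
    {x y : α} (h : x * y ≠ 0) : 0 < x * y ↔ (0 < x ↔ 0 < y) := by
  obtain ⟨hx, hy⟩ := mul_ne_zero_iff.1 h
  rcases hx.lt_or_gt with hx | hx <;> rcases hy.lt_or_gt with hy | hy <;>
    simp [mul_pos_iff, hx, hy, hx.le, hy.le, not_lt.2]

theorem Finset.even_card_filter_insert_iff {α : Type*} [DecidableEq α] {p : α → Prop}
    [DecidablePred p] {A : Finset α} {r : α} (hr : r ∉ A) :
    Even #((insert r A).filter p) ↔ (Even #(A.filter p) ↔ ¬ p r) := by
  by_cases hpr : p r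
  · rw [filter_insert, if_pos hpr, card_insert_of_notMem (by simp [hr]), Nat.even_add_one]
    tauto
  · rw [filter_insert, if_neg hpr]
    tauto

theorem Finset.natCard_subtype_eq_card_filter {α : Type*} (s : Finset α) (p : α → Prop)
    [DecidablePred p] : Nat.card {x : s // p x} = #(s.filter p) := by
  rw [Nat.card_eq_fintype_card, Fintype.card_subtype, ← card_map (Function.Embedding.subtype _)]
  congr 1
  ext x
  simp [and_comm]

theorem Nat.card_subtype_eq_of_iff_iff {ι : Type*} [Finite ι] {p q : ι → Prop} {s : Prop}
    (hpq : ∀ j, q j ↔ (p j ↔ s)) (hp : 2 * Nat.card {j // p j} = Nat.card ι) :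
    Nat.card {j // q j} = Nat.card {j // p j} := by
  have := Fintype.ofFinite ι
  classical
  by_cases hs : s
  · exact Nat.card_congr (Equiv.subtypeEquivRight fun j => by simp [hpq, hs])
  · rw [Nat.card_congr (Equiv.subtypeEquivRight fun j => (hpq j).trans (iff_false_right hs)),
      Nat.card_eq_fintype_card, Fintype.card_subtype_compl, ← Nat.card_eq_fintype_card,
      ← Nat.card_eq_fintype_card]
    omega

namespace Polynomial

theorem pos_eval_iff_of_roots_eq_zero {q : ℝ[X]} (hq : q.roots = 0) {x : ℝ}
    (hx : q.eval x ≠ 0) (y : ℝ) : 0 < q.eval x ↔ 0 < q.eval y := by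
  have hq0 : q ≠ 0 := by rintro rfl; simp at hx
  refine pos_iff_pos_of_forall_ne_zero q.continuous (fun z hz => ?_) x y
  simpa [hq] using (mem_roots hq0).2 hz

theorem exists_pos_eval_prod_X_sub_C_mul_iff_even_card_lt {q : ℝ[X]} (hq : q.roots = 0)
    (m : Multiset ℝ) :
    ∃ Z ⊆ m.toFinset, ∃ s : Prop, ∀ t, ((m.map fun a => X - C a).prod * q).eval t ≠ 0 →
      (0 < ((m.map fun a => X - C a).prod * q).eval t ↔ (Even #(Z.filter (· < t)) ↔ s)) := by
  induction m using Multiset.induction_on with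
  | empty =>
    refine ⟨∅, empty_subset _, 0 < q.eval 0, fun t ht => ?_⟩
    simp only [Multiset.map_zero, Multiset.prod_zero, one_mul] at ht ⊢
    simpa using pos_eval_iff_of_roots_eq_zero hq ht 0
  | cons a m ih =>
    obtain ⟨Z, hZ, s, hs⟩ := ih
    have hsub : insert a Z ⊆ (a ::ₘ m).toFinset := by
      simpa using insert_subset_insert a hZ
    simp only [Multiset.map_cons, Multiset.prod_cons, mul_assoc]
    -- the factor `t - a` flips the sign exactly when `t < a`; toggling `a` in `Z` records this
    by_cases haZ : a ∈ Z
    · refine ⟨Z.erase a, (erase_subset a Z).trans ((subset_insert a Z).trans hsub), ¬ s,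
        fun t ht => ?_⟩
      rw [eval_mul, eval_sub, eval_X, eval_C] at ht ⊢
      have hflip := even_card_filter_insert_iff (p := (· < t)) (notMem_erase a Z)
      rw [insert_erase haZ] at hflip
      rw [mul_pos_iff_of_ne_zero ht, hs t (right_ne_zero_of_mul ht), sub_pos, hflip]
      tauto
    · refine ⟨insert a Z, hsub, ¬ s, fun t ht => ?_⟩
      rw [eval_mul, eval_sub, eval_X, eval_C] at ht ⊢
      rw [mul_pos_iff_of_ne_zero ht, hs t (right_ne_zero_of_mul ht), sub_pos,
        even_card_filter_insert_iff haZ]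
      tauto

theorem exists_pos_eval_iff_even_card_lt (p : ℝ[X]) :
    ∃ Z ⊆ p.roots.toFinset, ∃ s : Prop, ∀ t, p.eval t ≠ 0 →
      (0 < p.eval t ↔ (Even #(Z.filter (· < t)) ↔ s)) := by
  obtain ⟨q, hpq, -, hq⟩ := exists_prod_multiset_X_sub_C_mul p
  simpa only [hpq] using exists_pos_eval_prod_X_sub_C_mul_iff_even_card_lt hq p.roots

end Polynomial

noncomputable def momentPolynomial (n : ℕ) (w : Fin n → ℝ) : ℝ[X] :=
  ∑ k : Fin n, C (w k) * X ^ ((k : ℕ) + 1)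

theorem eval_momentPolynomial (n : ℕ) (w : Fin n → ℝ) (x : ℝ) :
    (momentPolynomial n w).eval x = momentPairing n w x := by
  simp [momentPolynomial, momentPairing, eval_finsetSum]

theorem natDegree_momentPolynomial_le (n : ℕ) (w : Fin n → ℝ) :
    (momentPolynomial n w).natDegree ≤ n :=
  natDegree_sum_le_of_forall_le _ _ fun k _ =>
    natDegree_C_mul_X_pow_le (w k) _ |>.trans k.isLt

theorem coeff_momentPolynomial_succ (n : ℕ) (w : Fin n → ℝ) (k : Fin n) :
    (momentPolynomial n w).coeff ((k : ℕ) + 1) = w k := by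
  simp [momentPolynomial, coeff_C_mul, coeff_X_pow, Fin.val_inj]

theorem momentPolynomial_sub_C_ne_zero {n : ℕ} {w : Fin n → ℝ} (hw : w ≠ 0) (b : ℝ) :
    momentPolynomial n w - C b ≠ 0 := by
  obtain ⟨k, hk⟩ := Function.ne_iff.mp hw
  intro h
  apply hk
  simpa [coeff_momentPolynomial_succ] using congrArg (coeff · ((k : ℕ) + 1)) h

theorem stmt6_general (n : ℕ) (a : Fin n → ℕ)
    (t : (i : Fin n) → Fin (2 * a i) → ℝ)
    (w : Fin n → ℝ) (hw : w ≠ 0) (b : ℝ)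
    (hmiss : ∀ i j, momentPairing n w (t i j) ≠ b)
    (hbisect : ∀ i,
      Nat.card {j : Fin (2 * a i) // b < momentPairing n w (t i j)} = a i) :
    ∃ Z : Finset ℝ, Z.card ≤ n ∧ (∀ i j, t i j ∉ Z) ∧
      ∀ i, Nat.card {j : Fin (2 * a i) //
          Even (Nat.card {z : Z // (z : ℝ) < t i j})} = a i := by
  set P := momentPolynomial n w - C b
  have hP : ∀ x, P.eval x = momentPairing n w x - b := fun x => by
    simp [P, eval_momentPolynomial]
  have hne : ∀ i j, P.eval (t i j) ≠ 0 := fun i j => by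
    rw [hP]
    exact sub_ne_zero.2 (hmiss i j)
  obtain ⟨Z, hZ, s, hsign⟩ := P.exists_pos_eval_iff_even_card_lt
  refine ⟨Z, ?_, fun i j h => ?_, fun i => ?_⟩
  · calc #Z ≤ #P.roots.toFinset := card_le_card hZ
      _ ≤ P.natDegree := (Multiset.toFinset_card_le _).trans (card_roots' P)
      _ ≤ n := natDegree_sub_C.le.trans (natDegree_momentPolynomial_le n w)
  · exact hne i j ((mem_roots (momentPolynomial_sub_C_ne_zero hw b)).1
      (Multiset.mem_toFinset.1 (hZ h)))
  · have hhalf : 2 * Nat.card {j // b < momentPairing n w (t i j)} = Nat.card (Fin (2 * a i)) := by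
      rw [hbisect i, Nat.card_eq_fintype_card, Fintype.card_fin]
    refine (Nat.card_subtype_eq_of_iff_iff (s := s) (fun j => ?_) hhalf).trans (hbisect i)
    have hpos : 0 < P.eval (t i j) ↔ b < momentPairing n w (t i j) := by rw [hP, sub_pos]
    rw [Z.natCard_subtype_eq_card_filter (· < t i j), ← hpos, hsign _ (hne i j)]
    tauto

theorem stmt6 (n : ℕ) (hn : 1 ≤ n) (a : Fin n → ℕ) (ha : ∀ i, 1 ≤ a i)
    (t : (i : Fin n) → Fin (2 * a i) → ℝ) (ht : ∀ i j, t i j ∈ Set.Icc (0 : ℝ) 1)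
    (w : Fin n → ℝ) (hw : w ≠ 0) (b : ℝ)
    (hmiss : ∀ i j, momentPairing n w (t i j) ≠ b)
    (hbisect : ∀ i,
      Nat.card {j : Fin (2 * a i) // b < momentPairing n w (t i j)} = a i) :
    ∃ Z : Finset ℝ, Z.card ≤ n ∧ (∀ i j, t i j ∉ Z) ∧
      ∀ i, Nat.card {j : Fin (2 * a i) //
          Even (Nat.card {z : Z // (z : ℝ) < t i j})} = a i :=
  stmt6_general n a t w hw b hmiss hbisect
end

section
/- Let n ≥ 2 be an integer, τ ∈ [0,1] and α = (α_2,…,α_n) ∈ ℝ^{n−1}, and write x = (x_1,…,x_{n+1}) = Φ(τ,α). (Case 1) If τ > 0 then α_2 = 1/n − x_1/τ, and for every j with 2 ≤ j ≤ n−1, α_{j+1} = ( (j−1+τ)/n + (1−τ)·α_j − Σ_{i=1}^{j} x_i ) / τ. (Case 2) If τ < 1 then α_n = −(n−1+τ)/(n(1−τ)) + (Σ_{i=1}^{n} x_i)/(1−τ), and for every j with 2 ≤ j ≤ n−1, α_j = (τ/(1−τ))·α_{j+1} − (j−1+τ)/(n(1−τ)) + (Σ_{i=1}^{j} x_i)/(1−τ).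 (Thus the transformed coordinates can be recovered from the point by forward recursion when τ ≥ 1/2 > 0 and by backward recursion when τ ≤ 1/2 < 1.) -/
/-
The coordinates of each `d^τ_i` sum to zero, so the partial sums of `x = Φ(τ, α)` telescope:
for `1 ≤ j ≤ n`, `x_1 + ⋯ + x_j = (j - 1 + τ)/n + (1 - τ) α_j - τ α_{j+1}`, where a term whose
index lies outside `[2, n]` is absent. Solving this for `α_{j+1}` (when `τ > 0`) or for `α_j`
(when `τ < 1`) gives the two recursions.
-/

/-- The vector `d^τ_i = -τ·e_{i-1} + e_i - (1-τ)·e_{i+1}` of `ℝ^{n+1}`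
(`e_1, …, e_{n+1}` is the standard basis, so the 1-indexed position `p`
corresponds to the 0-based index `p - 1`). -/
def dvec (n : ℕ) (τ : ℝ) (i : ℕ) : Fin (n + 1) → ℝ := fun k =>
  if (k : ℕ) + 2 = i then -τ
  else if (k : ℕ) + 1 = i then 1
  else if (k : ℕ) = i then -(1 - τ) else 0

/-- The origin `0_τ = (τ/n, 1/n, …, 1/n, (1-τ)/n)` of `ℝ^{n+1}`. -/
noncomputable def originVec (n : ℕ) (τ : ℝ) : Fin (n + 1) → ℝ := fun k =>
  if (k : ℕ) = 0 then τ / n else if (k : ℕ) = n then (1 - τ) / n else 1 / n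

/-- `Φ(τ, α) = 0_τ + Σ_{i=2}^{n} α_i · d^τ_i`, the point with transformed
coordinates `(τ; α_2, …, α_n)`. -/
noncomputable def Phi (n : ℕ) (τ : ℝ) (α : ℕ → ℝ) : Fin (n + 1) → ℝ := fun k =>
  originVec n τ k + ∑ i ∈ Finset.Icc 2 n, α i * dvec n τ i k

lemma Finset.sum_filter_val_lt_succ {M : Type*} [AddCommMonoid M] {m : ℕ} (x : Fin m → M)
    (j : ℕ) (hj : j < m) :
    ∑ i ∈ univ.filter (fun i : Fin m => (i : ℕ) < j + 1), x i
      = ∑ i ∈ univ.filter (fun i : Fin m => (i : ℕ) < j), x i + x ⟨j, hj⟩ := by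
  have hset : univ.filter (fun i : Fin m => (i : ℕ) < j + 1)
      = insert ⟨j, hj⟩ (univ.filter (fun i : Fin m => (i : ℕ) < j)) := by
    ext i
    simp only [mem_filter, mem_insert, mem_univ, true_and, Fin.ext_iff]
    omega
  rw [hset, sum_insert (by simp), add_comm]

lemma originVec_zero (n : ℕ) (τ : ℝ) : originVec n τ 0 = τ / n := by
  simp [originVec]

lemma originVec_of_pos_of_lt {n j : ℕ} (τ : ℝ) (hj : j < n + 1) (hj0 : 0 < j) (hjn : j < n) :
    originVec n τ ⟨j, hj⟩ = 1 / n := by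
  simp only [originVec, if_neg hj0.ne', if_neg hjn.ne]

lemma Phi_apply (n : ℕ) (τ : ℝ) (α : ℕ → ℝ) (j : ℕ) (hj : j < n + 1) :
    Phi n τ α ⟨j, hj⟩ = originVec n τ ⟨j, hj⟩
      + ((if j + 2 ≤ n then -τ * α (j + 2) else 0)
      + ((if 1 ≤ j ∧ j + 1 ≤ n then α (j + 1) else 0)
      + (if 2 ≤ j ∧ j ≤ n then -(1 - τ) * α j else 0))) := by
  have hterm : ∀ i ∈ Finset.Icc 2 n, α i * dvec n τ i ⟨j, hj⟩ =
      (if j + 2 = i then -τ * α i else 0) + ((if j + 1 = i then α i else 0)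
        + (if j = i then -(1 - τ) * α i else 0)) := by
    intro i _
    simp only [dvec]
    split_ifs <;> first | ring1 | omega
  rw [Phi, Finset.sum_congr rfl hterm, Finset.sum_add_distrib, Finset.sum_add_distrib,
    Finset.sum_ite_eq, Finset.sum_ite_eq, Finset.sum_ite_eq]
  simp only [Finset.mem_Icc]
  split_ifs <;> first | ring1 | omega

lemma sum_filter_lt_Phi {n : ℕ} (τ : ℝ) (α : ℕ → ℝ) {j : ℕ} (hj1 : 1 ≤ j) (hjn : j ≤ n) :
    ∑ i ∈ Finset.univ.filter (fun i : Fin (n + 1) => (i : ℕ) < j), Phi n τ α i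
      = ((j : ℝ) - 1 + τ) / n + (if 2 ≤ j then (1 - τ) * α j else 0)
        - (if j + 1 ≤ n then τ * α (j + 1) else 0) := by
  induction j, hj1 using Nat.le_induction with
  | base =>
    rw [Finset.sum_filter_val_lt_succ _ 0 (by omega), Finset.filter_false_of_mem (by simp),
      Finset.sum_empty, Phi_apply, Fin.mk_zero', originVec_zero]
    split_ifs <;> first | (push_cast; ring1) | omega
  | succ j hj1 ih =>
    rw [Finset.sum_filter_val_lt_succ _ j (by omega), ih (by omega), Phi_apply,
      originVec_of_pos_of_lt τ _ (by omega) (by omega)]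
    push_cast
    split_ifs <;> first | ring1 | omega

theorem stmt10_general (n : ℕ) (hn : 2 ≤ n) (τ : ℝ)
    (α : ℕ → ℝ) (x : Fin (n + 1) → ℝ) (hx : x = Phi n τ α) :
    (0 < τ →
      α 2 = 1 / n - x ⟨0, Nat.succ_pos n⟩ / τ ∧
      ∀ (j : ℕ), 2 ≤ j → j ≤ n - 1 →
        α (j + 1) = (((j : ℝ) - 1 + τ) / n + (1 - τ) * α j
          - ∑ i ∈ Finset.univ.filter (fun i : Fin (n + 1) => (i : ℕ) < j), x i) / τ) ∧
    (τ < 1 →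
      α n = -((n : ℝ) - 1 + τ) / (n * (1 - τ))
          + (∑ i ∈ Finset.univ.filter (fun i : Fin (n + 1) => (i : ℕ) < n), x i) / (1 - τ) ∧
      ∀ (j : ℕ), 2 ≤ j → j ≤ n - 1 →
        α j = (τ / (1 - τ)) * α (j + 1) - ((j : ℝ) - 1 + τ) / (n * (1 - τ))
          + (∑ i ∈ Finset.univ.filter (fun i : Fin (n + 1) => (i : ℕ) < j), x i) / (1 - τ)) := by
  subst hx
  have hn0 : (n : ℝ) ≠ 0 := by positivity
  have hinner : ∀ j, 2 ≤ j → j ≤ n - 1 →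
      ∑ i ∈ Finset.univ.filter (fun i : Fin (n + 1) => (i : ℕ) < j), Phi n τ α i
        = ((j : ℝ) - 1 + τ) / n + (1 - τ) * α j - τ * α (j + 1) := by
    intro j hj2 hjn
    rw [sum_filter_lt_Phi τ α (by omega) (by omega), if_pos hj2, if_pos (by omega)]
  refine ⟨fun hτ0 => ⟨?_, fun j hj2 hjn => ?_⟩, fun hτ1 => ⟨?_, fun j hj2 hjn => ?_⟩⟩
  · rw [Phi_apply, Fin.mk_zero', originVec_zero, if_pos hn, if_neg (by omega),
      if_neg (by omega)]
    field_simp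
    ring
  · rw [hinner j hj2 hjn]
    field_simp
    ring
  · have h1τ : 1 - τ ≠ 0 := by linarith
    rw [sum_filter_lt_Phi τ α (by omega) le_rfl, if_pos hn, if_neg (by omega)]
    field_simp
    ring
  · have h1τ : 1 - τ ≠ 0 := by linarith
    rw [hinner j hj2 hjn]
    field_simp
    ring

theorem stmt10 (n : ℕ) (hn : 2 ≤ n) (τ : ℝ) (hτ : τ ∈ Set.Icc (0 : ℝ) 1)
    (α : ℕ → ℝ) (x : Fin (n + 1) → ℝ) (hx : x = Phi n τ α) :
    (0 < τ →
      α 2 = 1 / n - x ⟨0, Nat.succ_pos n⟩ / τ ∧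
      ∀ (j : ℕ), 2 ≤ j → j ≤ n - 1 →
        α (j + 1) = (((j : ℝ) - 1 + τ) / n + (1 - τ) * α j
          - ∑ i ∈ Finset.univ.filter (fun i : Fin (n + 1) => (i : ℕ) < j), x i) / τ) ∧
    (τ < 1 →
      α n = -((n : ℝ) - 1 + τ) / (n * (1 - τ))
          + (∑ i ∈ Finset.univ.filter (fun i : Fin (n + 1) => (i : ℕ) < n), x i) / (1 - τ) ∧
      ∀ (j : ℕ), 2 ≤ j → j ≤ n - 1 →
        α j = (τ / (1 - τ)) * α (j + 1) - ((j : ℝ) - 1 + τ) / (n * (1 - τ))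
          + (∑ i ∈ Finset.univ.filter (fun i : Fin (n + 1) => (i : ℕ) < j), x i) / (1 - τ)) :=
  stmt10_general n hn τ α x hx
end

section
/- Let n ≥ 1 be an integer. Suppose that every open necklace with n colours in which every colour occurs an even number of times admits a 2-splitting with at most n cuts. Then every open necklace with n colours in which the number of beads of every colour is divisible by 4 admits a 4-splitting with at most 3n cuts. -/
/-!
Split the necklace between two thieves with at most `n` cuts. Each thief's share, read as a
necklace of its own, again has every colour an even number of times, so it splits between two
thieves with at most `n` cuts; pulling these cuts back to the original necklace gives four equal
shares with at most `n + 2n` cuts.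
-/

/-- `NecklaceSplitting n N beads k t`: the open necklace with `N` beads whose `i`-th
bead has colour `beads i` admits a `k`-splitting with at most `t` cuts.  A cut at
position `z ∈ {1, …, N-1}` separates bead `z - 1` from bead `z`; the assignment
`f` of beads to the `k` thieves must be constant on the blocks between consecutive
cuts, and each thief receives exactly a `1/k` fraction of the beads of each colour. -/
def NecklaceSplitting (n N : ℕ) (beads : ℕ → Fin n) (k t : ℕ) [NeZero k] : Prop :=
  ∃ (Z : Finset ℕ) (f : ℕ → Fin k),
    Z ⊆ Finset.Icc 1 (N - 1) ∧ Z.card ≤ t ∧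
    (∀ i : ℕ, i + 1 ∉ Z → f (i + 1) = f i) ∧
    (∀ (th : Fin k) (c : Fin n),
      k * ((Finset.range N).filter (fun i => beads i = c ∧ f i = th)).card
        = ((Finset.range N).filter (fun i => beads i = c)).card)

open Finset

namespace Nat

variable {p : ℕ → Prop} [DecidablePred p]

theorem lt_card_of_lt_count {N w : ℕ} (hw : w < count p N) :
    ∀ hf : (Set.ofPred p).Finite, w < #hf.toFinset :=
  fun hf => hw.trans_le (count_le_card hf N)

theorem card_filter_range_and_count (N : ℕ) (Q : ℕ → ℕ → Prop) [∀ i, DecidablePred (Q i)] :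
    #{i ∈ range N | p i ∧ Q i (count p i)} = #{w ∈ range (count p N) | Q (nth p w) w} := by
  apply card_bij' (fun i _ => count p i) (fun w _ => nth p w)
  · intro i hi
    simp only [mem_filter, mem_range] at hi ⊢
    exact ⟨count_strict_mono hi.2.1 hi.1, by rw [nth_count hi.2.1]; exact hi.2.2⟩
  · intro w hw
    simp only [mem_filter, mem_range] at hw ⊢
    refine ⟨nth_lt_of_lt_count hw.1, nth_mem w (lt_card_of_lt_count hw.1), ?_⟩
    rw [count_nth (lt_card_of_lt_count hw.1)]; exact hw.2
  · intro i hi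
    exact nth_count (mem_filter.1 hi).2.1
  · intro w hw
    exact count_nth (lt_card_of_lt_count (mem_range.1 (mem_filter.1 hw).1))

theorem card_filter_range_comp_nth {α : Type*} (N : ℕ) (beads : ℕ → α) (c : α)
    [DecidableEq α] :
    #{w ∈ range (count p N) | beads (nth p w) = c} = #{i ∈ range N | beads i = c ∧ p i} := by
  rw [← card_filter_range_and_count N fun i _ => beads i = c]
  simp only [and_comm]

theorem nth_mem_Icc_of_mem_Icc_count {N w : ℕ} (hw : w ∈ Icc 1 (count p N - 1)) :
    nth p w ∈ Icc 1 (N - 1) := by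
  rw [mem_Icc] at hw ⊢
  have hlt : w < count p N := by omega
  have := le_nth (lt_card_of_lt_count hlt)
  have := nth_lt_of_lt_count hlt
  omega

end Nat

/-- `beads ∘ Nat.nth (f₀ · = th)` is the share of thief `th` read as a necklace of its own;
the refined splitting cuts at the old cuts and at every bead where a share is cut. -/
theorem NecklaceSplitting.of_split_shares {n N k m s t : ℕ} [NeZero k] [NeZero m]
    {beads : ℕ → Fin n} {Z₀ : Finset ℕ} {f₀ : ℕ → Fin k}
    (hZ₀ : Z₀ ⊆ Icc 1 (N - 1)) (hcard₀ : #Z₀ ≤ s)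
    (hconst₀ : ∀ i, i + 1 ∉ Z₀ → f₀ (i + 1) = f₀ i)
    (hfair₀ : ∀ (th : Fin k) (c : Fin n),
      k * #{i ∈ range N | beads i = c ∧ f₀ i = th} = #{i ∈ range N | beads i = c})
    (hparts : ∀ th : Fin k,
      NecklaceSplitting n (Nat.count (f₀ · = th) N) (beads ∘ Nat.nth (f₀ · = th)) m t) :
    NecklaceSplitting n N beads (k * m) (s + k * t) := by
  choose Z g hZ hcard hconst hfair using hparts
  simp only [Function.comp_apply] at hfair
  let f : ℕ → Fin (k * m) := fun i =>
    finProdFinEquiv (f₀ i, g (f₀ i) (Nat.count (f₀ · = f₀ i) i))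
  refine ⟨Z₀ ∪ univ.biUnion fun th => (Z th).image (Nat.nth (f₀ · = th)), f, ?_, ?_, ?_, ?_⟩
  · exact union_subset hZ₀ <| biUnion_subset.2 fun th _ =>
      image_subset_iff.2 fun w hw => Nat.nth_mem_Icc_of_mem_Icc_count (hZ th hw)
  · calc _ ≤ #Z₀ + ∑ th, #((Z th).image (Nat.nth (f₀ · = th))) :=
          (card_union_le _ _).trans (Nat.add_le_add_left card_biUnion_le _)
      _ ≤ s + ∑ _th : Fin k, t :=
          add_le_add hcard₀ (sum_le_sum fun th _ => card_image_le.trans (hcard th))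
      _ = s + k * t := by simp
  · intro i hi
    have hi₀ : f₀ (i + 1) = f₀ i := hconst₀ i fun h => hi (mem_union_left _ h)
    have hcount : Nat.count (f₀ · = f₀ i) (i + 1) = Nat.count (f₀ · = f₀ i) i + 1 :=
      Nat.count_succ_eq_succ_count_iff.2 rfl
    have hnot : Nat.count (f₀ · = f₀ i) i + 1 ∉ Z (f₀ i) := fun h =>
      hi <| mem_union_right _ <| mem_biUnion.2 ⟨f₀ i, mem_univ _,
        mem_image.2 ⟨_, h, by rw [← hcount]; exact Nat.nth_count hi₀⟩⟩
    simp only [f, hi₀, hcount, hconst _ _ hnot]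
  · intro th c
    obtain ⟨⟨a, b⟩, rfl⟩ := finProdFinEquiv.surjective th
    have hshare : #{i ∈ range N | beads i = c ∧ f i = finProdFinEquiv (a, b)}
        = #{w ∈ range (Nat.count (f₀ · = a) N) |
            beads (Nat.nth (f₀ · = a) w) = c ∧ g a w = b} := by
      rw [← Nat.card_filter_range_and_count (p := (f₀ · = a)) N
        fun i w => beads i = c ∧ g a w = b]
      congr 1
      refine filter_congr fun i _ => ?_
      simp only [f, finProdFinEquiv.apply_eq_iff_eq, Prod.mk.injEq]
      constructor
      · rintro ⟨hc, rfl, hb⟩; exact ⟨rfl, hc, hb⟩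
      · rintro ⟨rfl, hc, hb⟩; exact ⟨hc, rfl, hb⟩
    rw [hshare, mul_assoc, hfair, Nat.card_filter_range_comp_nth, hfair₀]

theorem stmt14_general (n : ℕ)
    (h2 : ∀ (N : ℕ) (beads : ℕ → Fin n),
      (∀ c : Fin n, Even (((Finset.range N).filter (fun i => beads i = c)).card)) →
      NecklaceSplitting n N beads 2 n) :
    ∀ (N : ℕ) (beads : ℕ → Fin n),
      (∀ c : Fin n, 4 ∣ ((Finset.range N).filter (fun i => beads i = c)).card) →
      NecklaceSplitting n N beads 4 (3 * n) := by
  intro N beads h4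
  obtain ⟨Z₀, f₀, hZ₀, hcard₀, hconst₀, hfair₀⟩ :=
    h2 N beads fun c => even_iff_two_dvd.2 (dvd_trans ⟨2, rfl⟩ (h4 c))
  have hsplit : NecklaceSplitting n N beads (2 * 2) (n + 2 * n) := by
    refine .of_split_shares hZ₀ hcard₀ hconst₀ hfair₀ fun th => h2 _ _ fun c => ?_
    obtain ⟨a, ha⟩ := h4 c
    have hhalf := hfair₀ th c
    simp only [Function.comp_apply, Nat.card_filter_range_comp_nth]
    exact ⟨a, by omega⟩
  rwa [show n + 2 * n = 3 * n by ring] at hsplit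

theorem stmt14 (n : ℕ) (hn : 1 ≤ n)
    (h2 : ∀ (N : ℕ) (beads : ℕ → Fin n),
      (∀ c : Fin n, Even (((Finset.range N).filter (fun i => beads i = c)).card)) →
      NecklaceSplitting n N beads 2 n) :
    ∀ (N : ℕ) (beads : ℕ → Fin n),
      (∀ c : Fin n, 4 ∣ ((Finset.range N).filter (fun i => beads i = c)).card) →
      NecklaceSplitting n N beads 4 (3 * n) :=
  stmt14_general n h2
end
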